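/- arXiv:2209.07308 — 4 statements merged into one kernel-verified Lean document; each statement's English description precedes it below -/
import Mathlib

section
/- Let ψ, φ be nonzero vectors in a finite-dimensional complex inner product space with ⟨φ, ψ⟩ ≠ 0, and let η be a Hermitian invertible operator. The transition matrix T = |ψ⟩⟨φ| / ⟨φ|ψ⟩ is η-pseudo-Hermitian if and only if T = |ψ⟩⟨ψ|η / ⟨ψ|η|ψ⟩ (in particular ⟨ψ|η|ψ⟩ ≠ 0 and η|ψ⟩ is a nonzero scalar multiple of |φ⟩). -/
/-!
Since `T ψ = ψ`, the relation `T† η = η T` applied to `ψ` gives `η ψ = T† η ψ`, and `T†` has range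
`ℂ φ`; so `η ψ` is a multiple `c φ` of `φ`, nonzero because `η` is invertible. Taking adjoints,
`⟨ψ| η = c̄ ⟨φ|`, which turns `|ψ⟩⟨ψ| η / ⟨ψ|η|ψ⟩` back into `T`. Conversely, any `S η` with `S`
Hermitian is η-pseudo-Hermitian, and `|ψ⟩⟨ψ| / ⟨ψ|η|ψ⟩` is Hermitian because `⟨ψ|η|ψ⟩` is real.
-/

open Matrix

namespace Matrix

variable {m K : Type*} [Field K] [StarRing K]

theorem isHermitian_vecMulVec_star (v : m → K) : (vecMulVec v (star v)).IsHermitian := by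
  rw [IsHermitian, conjTranspose_vecMulVec, star_star]

variable [Fintype m]

def transitionMatrix (ψ φ : m → K) : Matrix m m K :=
  (star φ ⬝ᵥ ψ)⁻¹ • vecMulVec ψ (star φ)

theorem transitionMatrix_mulVec (ψ φ x : m → K) :
    transitionMatrix ψ φ *ᵥ x = ((star φ ⬝ᵥ x) / (star φ ⬝ᵥ ψ)) • ψ := by
  rw [transitionMatrix, smul_mulVec, vecMulVec_mulVec, op_smul_eq_smul, smul_smul, div_eq_inv_mul]

theorem transitionMatrix_mulVec_self {ψ φ : m → K} (h : star φ ⬝ᵥ ψ ≠ 0) :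
    transitionMatrix ψ φ *ᵥ ψ = ψ := by
  rw [transitionMatrix_mulVec, div_self h, one_smul]

theorem conjTranspose_transitionMatrix (ψ φ : m → K) :
    (transitionMatrix ψ φ)ᴴ = transitionMatrix φ ψ := by
  rw [transitionMatrix, transitionMatrix, conjTranspose_smul, conjTranspose_vecMulVec, star_star,
    star_inv₀, ← star_dotProduct]

theorem IsHermitian.isSelfAdjoint_star_dotProduct_mulVec {A : Matrix m m K} (hA : A.IsHermitian)
    (v : m → K) : IsSelfAdjoint (star v ⬝ᵥ A *ᵥ v) := by
  rw [IsSelfAdjoint, ← star_dotProduct, star_mulVec, hA.eq, dotProduct_mulVec]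

theorem mulVec_eq_smul_of_conjTranspose_transitionMatrix_mul {η : Matrix m m K} {ψ φ : m → K}
    (hov : star φ ⬝ᵥ ψ ≠ 0) (h : (transitionMatrix ψ φ)ᴴ * η = η * transitionMatrix ψ φ) :
    η *ᵥ ψ = ((star ψ ⬝ᵥ η *ᵥ ψ) / (star ψ ⬝ᵥ φ)) • φ :=
  calc η *ᵥ ψ = (η * transitionMatrix ψ φ) *ᵥ ψ := by
        rw [← mulVec_mulVec, transitionMatrix_mulVec_self hov]
    _ = transitionMatrix φ ψ *ᵥ (η *ᵥ ψ) := by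
        rw [← h, ← mulVec_mulVec, conjTranspose_transitionMatrix]
    _ = _ := transitionMatrix_mulVec _ _ _

theorem transitionMatrix_eq_of_mulVec_eq_smul {η : Matrix m m K} {ψ φ : m → K} {c : K}
    (hη : η.IsHermitian) (hc : η *ᵥ ψ = c • φ) (hb : star ψ ⬝ᵥ η *ᵥ ψ ≠ 0) :
    transitionMatrix ψ φ = (star ψ ⬝ᵥ η *ᵥ ψ)⁻¹ • (vecMulVec ψ (star ψ) * η) := by
  have hrow : star ψ ᵥ* η = star c • star φ := by
    rw [← star_smul, ← hc, star_mulVec, hη.eq]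
  have hb_eq : star ψ ⬝ᵥ η *ᵥ ψ = (star φ ⬝ᵥ ψ) * star c := by
    rw [dotProduct_mulVec, hrow, smul_dotProduct, smul_eq_mul, mul_comm]
  have hc' : star c ≠ 0 := right_ne_zero_of_mul (hb_eq ▸ hb)
  rw [vecMulVec_mul, hrow, vecMulVec_smul, smul_smul, hb_eq, mul_inv,
    inv_mul_cancel_right₀ hc', transitionMatrix]

variable [DecidableEq m]

theorem conjTranspose_eq_mul_mul_inv_iff {η X : Matrix m m K} (hdet : IsUnit η.det) :
    Xᴴ = η * X * η⁻¹ ↔ Xᴴ * η = η * X :=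
  ⟨fun h => by rw [h, nonsing_inv_mul_cancel_right η _ hdet],
    fun h => by rw [← h, mul_nonsing_inv_cancel_right η _ hdet]⟩

theorem IsHermitian.conjTranspose_mul_eq {S η : Matrix m m K} (hS : S.IsHermitian)
    (hη : η.IsHermitian) (hdet : IsUnit η.det) : (S * η)ᴴ = η * (S * η) * η⁻¹ := by
  rw [conjTranspose_mul, hS.eq, hη.eq, ← Matrix.mul_assoc, mul_nonsing_inv_cancel_right η _ hdet]

end Matrix

theorem transition_matrix_pseudo_hermitian_iff_general {n : ℕ}
    (η : Matrix (Fin n) (Fin n) ℂ) (hη : η.IsHermitian) (hinv : IsUnit η.det)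
    (ψ φ : Fin n → ℂ) (hψ : ψ ≠ 0)
    (hov : star φ ⬝ᵥ ψ ≠ 0) :
    let T : Matrix (Fin n) (Fin n) ℂ := (star φ ⬝ᵥ ψ)⁻¹ • vecMulVec ψ (star φ)
    (Tᴴ = η * T * η⁻¹ ↔
      (star ψ ⬝ᵥ η.mulVec ψ ≠ 0 ∧
        T = (star ψ ⬝ᵥ η.mulVec ψ)⁻¹ • (vecMulVec ψ (star ψ) * η) ∧
        ∃ c : ℂ, c ≠ 0 ∧ η.mulVec ψ = c • φ)) := by
  intro T
  have hηψ : η *ᵥ ψ ≠ 0 := fun h => hψ (eq_zero_of_mulVec_eq_zero hinv.ne_zero h)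
  constructor
  · intro h
    have hc := mulVec_eq_smul_of_conjTranspose_transitionMatrix_mul hov
      ((conjTranspose_eq_mul_mul_inv_iff hinv).mp h)
    have hb : star ψ ⬝ᵥ η *ᵥ ψ ≠ 0 := fun h0 => hηψ (by rw [hc, h0, zero_div, zero_smul])
    exact ⟨hb, transitionMatrix_eq_of_mulVec_eq_smul hη hc hb, _,
      fun h0 => hηψ (by rw [hc, h0, zero_smul]), hc⟩
  · rintro ⟨-, hT, -⟩
    rw [hT, ← smul_mul]
    exact ((isHermitian_vecMulVec_star ψ).smul
      (hη.isSelfAdjoint_star_dotProduct_mulVec ψ).inv₀).conjTranspose_mul_eq hη hinv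

/-- For nonzero `ψ, φ` with `⟨φ,ψ⟩ ≠ 0` and Hermitian invertible `η`, the transition
matrix `T = |ψ⟩⟨φ| / ⟨φ|ψ⟩` is η-pseudo-Hermitian iff `T = |ψ⟩⟨ψ|η / ⟨ψ|η|ψ⟩`
(in particular `⟨ψ|η|ψ⟩ ≠ 0` and `η|ψ⟩` is a nonzero multiple of `φ`). -/
theorem transition_matrix_pseudo_hermitian_iff {n : ℕ}
    (η : Matrix (Fin n) (Fin n) ℂ) (hη : η.IsHermitian) (hinv : IsUnit η.det)
    (ψ φ : Fin n → ℂ) (hψ : ψ ≠ 0) (hφ : φ ≠ 0)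
    (hov : star φ ⬝ᵥ ψ ≠ 0) :
    let T : Matrix (Fin n) (Fin n) ℂ := (star φ ⬝ᵥ ψ)⁻¹ • vecMulVec ψ (star φ)
    (Tᴴ = η * T * η⁻¹ ↔
      (star ψ ⬝ᵥ η.mulVec ψ ≠ 0 ∧
        T = (star ψ ⬝ᵥ η.mulVec ψ)⁻¹ • (vecMulVec ψ (star ψ) * η) ∧
        ∃ c : ℂ, c ≠ 0 ∧ η.mulVec ψ = c • φ)) :=
  transition_matrix_pseudo_hermitian_iff_general η hη hinv ψ φ hψ hov
end

section
/- Let M be a diagonalizable complex matrix whose nonreal eigenvalues come in complex-conjugate pairs with equal multiplicities. Then there exists a Hermitian invertible matrix η such that M† = η M η⁻¹, i.e., M is pseudo-Hermitian. -/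
/-!
Write `M = P D P⁻¹` with `D = diagonal λ`. Since conjugation permutes `λ`, it is realised by an
involution `τ` of the indices, and the permutation matrix `S` of `τ` is Hermitian, squares to `1`
and satisfies `Dᴴ = S D S`. Transporting along `P`, `η = P⁻ᴴ S P⁻¹` does the same for `M`.
-/

open Matrix ComplexConjugate

theorem exists_involutive_perm_comp_eq_conj {ι : Type*} {lam : ι → ℂ} (σ : Equiv.Perm ι)
    (hσ : ∀ i, lam (σ i) = conj (lam i)) :
    ∃ τ : Equiv.Perm ι, Function.Involutive τ ∧ ∀ i, lam (τ i) = conj (lam i) := by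
  -- `σ` need not be an involution: use it on the upper half plane and undo it on the lower one
  let f : ι → ι := fun i =>
    if 0 < (lam i).im then σ i else if (lam i).im < 0 then σ.symm i else i
  have hf_pos {i : ι} (h : 0 < (lam i).im) : f i = σ i := if_pos h
  have hf_neg {i : ι} (h : (lam i).im < 0) : f i = σ.symm i := by
    simp only [f, if_neg h.not_gt, if_pos h]
  have hf_zero {i : ι} (h : (lam i).im = 0) : f i = i := by
    simp only [f, h, lt_irrefl, if_false]
  have hf (i : ι) : lam (f i) = conj (lam i) := by
    rcases lt_trichotomy (lam i).im 0 with hneg | hzero | hpos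
    · rw [hf_neg hneg, ← Complex.conj_conj (lam (σ.symm i)), ← hσ, σ.apply_symm_apply]
    · rw [hf_zero hzero, Complex.conj_eq_iff_im.mpr hzero]
    · rw [hf_pos hpos, hσ]
  have him (i : ι) : (lam (f i)).im = -(lam i).im := by rw [hf, Complex.conj_im]
  have hinv : Function.Involutive f := by
    intro i
    rcases lt_trichotomy (lam i).im 0 with hneg | hzero | hpos
    · have : 0 < (lam (f i)).im := by rw [him]; linarith
      rw [hf_pos this, hf_neg hneg, σ.apply_symm_apply]
    · rw [hf_zero hzero, hf_zero hzero]
    · have : (lam (f i)).im < 0 := by rw [him]; linarith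
      rw [hf_neg this, hf_pos hpos, σ.symm_apply_apply]
  exact ⟨hinv.toPerm f, hinv, hf⟩

namespace Matrix

variable {n R : Type*} [Fintype n] [DecidableEq n] [CommRing R] [StarRing R]

def IsPseudoHermitian (A : Matrix n n R) : Prop :=
  ∃ η : Matrix n n R, η.IsHermitian ∧ IsUnit η.det ∧ Aᴴ = η * A * η⁻¹

theorem IsPseudoHermitian.conj {A P : Matrix n n R} (hA : A.IsPseudoHermitian)
    (hP : IsUnit P.det) : (P * A * P⁻¹).IsPseudoHermitian := by
  obtain ⟨η, hη_herm, hη, hAη⟩ := hA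
  have hP_star : IsUnit Pᴴ.det := by rw [det_conjTranspose]; exact hP.star
  refine ⟨Pᴴ⁻¹ * η * P⁻¹, ?_, ?_, ?_⟩
  · simp only [IsHermitian, conjTranspose_mul, conjTranspose_nonsing_inv,
      conjTranspose_conjTranspose, hη_herm.eq, Matrix.mul_assoc]
  · simp only [det_mul]
    exact ((isUnit_nonsing_inv_det _ hP_star).mul hη).mul (isUnit_nonsing_inv_det _ hP)
  · simp only [conjTranspose_mul, conjTranspose_nonsing_inv, hAη, Matrix.mul_inv_rev,
      nonsing_inv_nonsing_inv _ hP, nonsing_inv_nonsing_inv _ hP_star, Matrix.mul_assoc,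
      nonsing_inv_mul_cancel_left _ _ hP]

theorem isPseudoHermitian_diagonal_of_involutive {d : n → R} {τ : Equiv.Perm n}
    (hτ : Function.Involutive τ) (hd : ∀ i, d (τ i) = star (d i)) :
    (diagonal d).IsPseudoHermitian := by
  have hτ_symm : τ.symm = τ := hτ.symm_eq_self_of_involutive τ
  have hSS : τ.permMatrix R * τ.permMatrix R = 1 := by
    rw [← permMatrix_mul, ← permMatrix_one]
    congr 1
    exact Equiv.ext hτ
  refine ⟨τ.permMatrix R, ?_, ?_, ?_⟩
  · rw [IsHermitian, conjTranspose_permMatrix, Equiv.Perm.inv_def, hτ_symm]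
  · exact IsUnit.of_mul_eq_one (τ.permMatrix R).det (by rw [← det_mul, hSS, det_one])
  · rw [inv_eq_left_inv hSS, PEquiv.toMatrix_toPEquiv_mul, PEquiv.mul_toMatrix_toPEquiv,
      submatrix_submatrix, Function.comp_id, Function.id_comp, hτ_symm,
      submatrix_diagonal_equiv, diagonal_conjTranspose]
    exact congrArg diagonal (funext fun i => (hd i).symm)

end Matrix

/-- Mostafazadeh: a diagonalizable matrix whose spectrum (with multiplicity) is
invariant under complex conjugation is η-pseudo-Hermitian for some Hermitian
invertible η. -/
theorem pseudo_hermitian_of_conj_invariant_spectrum {d : ℕ}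
    (M : Matrix (Fin d) (Fin d) ℂ)
    (hdiag : ∃ (P : Matrix (Fin d) (Fin d) ℂ) (lam : Fin d → ℂ)
        (σ : Equiv.Perm (Fin d)),
      IsUnit P.det ∧ M = P * diagonal lam * P⁻¹ ∧
      ∀ i, lam (σ i) = starRingEnd ℂ (lam i)) :
    ∃ η : Matrix (Fin d) (Fin d) ℂ,
      η.IsHermitian ∧ IsUnit η.det ∧ Mᴴ = η * M * η⁻¹ := by
  obtain ⟨P, lam, σ, hP, rfl, hσ⟩ := hdiag
  obtain ⟨τ, hτ, hτ_conj⟩ := exists_involutive_perm_comp_eq_conj σ hσ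
  exact (isPseudoHermitian_diagonal_of_involutive hτ hτ_conj).conj hP
end

section
/- Let η_A and η_B be positive definite Hermitian operators on finite-dimensional Hilbert spaces H_A, H_B, set η = η_A ⊗ η_B, and let ψ satisfy ⟨ψ, ηψ⟩ ≠ 0. Then all eigenvalues of T_A := tr_B(|ψ⟩⟨ψ|η) / ⟨ψ|η|ψ⟩ are nonnegative real numbers. -/
/-!
Reshaping `ψ` into the `m × k` matrix `Ψ`, one computes
`tr_B(|ψ⟩⟨ψ|(η_A ⊗ η_B)) = (Ψ η_Bᵀ Ψᴴ) η_A`, and `⟨ψ|η|ψ⟩ ≥ 0` because `η_A ⊗ η_B ≥ 0`.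
So `T_A = (⟨ψ|η|ψ⟩⁻¹ Ψ η_Bᵀ Ψᴴ) η_A` is a product `P Q` of two positive semidefinite matrices. With `S = √Q`, the nonzero
spectrum of `P Q = (P S) S` equals that of `S P S ≥ 0`, hence is nonnegative.
-/

open Matrix Kronecker ComplexOrder

/-- Partial trace over the second tensor factor. -/
noncomputable def trB {α β : Type*} [Fintype β]
    (X : Matrix (α × β) (α × β) ℂ) : Matrix α α ℂ :=
  Matrix.of fun a a' => ∑ b : β, X (a, b) (a', b)

open scoped MatrixOrder

theorem Matrix.PosSemidef.nonneg_of_mem_spectrum_mul {𝕜 n : Type*} [RCLike 𝕜] [Fintype n]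
    [DecidableEq n] {P Q : Matrix n n 𝕜} (hP : P.PosSemidef) (hQ : Q.PosSemidef) {μ : 𝕜}
    (hμ : μ ∈ spectrum 𝕜 (P * Q)) : 0 ≤ μ := by
  obtain rfl | hμ0 := eq_or_ne μ 0
  · exact le_rfl
  set S := CFC.sqrt Q
  have hS : Sᴴ = S := (CFC.sqrt_nonneg Q).posSemidef.isHermitian
  have hPQ : P * Q = P * S * S := by rw [mul_assoc, CFC.sqrt_mul_sqrt_self Q hQ.nonneg]
  have hSPS : μ ∈ spectrum 𝕜 (S * P * S) := by
    have : μ ∈ spectrum 𝕜 (P * S * S) \ {0} := ⟨hPQ ▸ hμ, hμ0⟩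
    rw [spectrum.nonzero_mul_comm, ← mul_assoc] at this
    exact this.1
  have hSPS_psd : (S * P * S).PosSemidef := by
    simpa only [hS] using hP.mul_mul_conjTranspose_same S
  exact (posSemidef_iff_isHermitian_and_spectrum_nonneg.mp hSPS_psd).2 hSPS

theorem trB_vecMulVec_mul_kronecker {α β : Type*} [Fintype α] [Fintype β]
    (ψ : α × β → ℂ) (A : Matrix α α ℂ) (B : Matrix β β ℂ) :
    trB (vecMulVec ψ (star ψ) * (A ⊗ₖ B)) =
      of (Function.curry ψ) * Bᵀ * (of (Function.curry ψ))ᴴ * A := by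
  ext a a'
  simp only [trB, of_apply, mul_apply, vecMulVec_apply, kroneckerMap_apply,
    Fintype.sum_prod_type, conjTranspose_apply, transpose_apply, Pi.star_apply,
    Function.curry_apply, Finset.sum_mul]
  rw [Finset.sum_comm]
  refine Finset.sum_congr rfl fun a'' _ => ?_
  rw [Finset.sum_comm]
  refine Finset.sum_congr rfl fun b'' _ => Finset.sum_congr rfl fun b _ => ?_
  ring

theorem eigenvalues_nonneg_of_posDef_factors_general {m k : ℕ}
    (ηA : Matrix (Fin m) (Fin m) ℂ) (ηB : Matrix (Fin k) (Fin k) ℂ)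
    (hηA : ηA.PosDef) (hηB : ηB.PosDef)
    (ψ : Fin m × Fin k → ℂ) :
    let TA : Matrix (Fin m) (Fin m) ℂ :=
      (star ψ ⬝ᵥ (ηA ⊗ₖ ηB).mulVec ψ)⁻¹ •
        trB (vecMulVec ψ (star ψ) * (ηA ⊗ₖ ηB))
    ∀ μ ∈ spectrum ℂ TA, ∃ r : ℝ, 0 ≤ r ∧ μ = (r : ℂ) := by
  intro TA μ hμ
  set c := star ψ ⬝ᵥ (ηA ⊗ₖ ηB).mulVec ψ
  set Ψ : Matrix (Fin m) (Fin k) ℂ := of (Function.curry ψ)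
  have hc : 0 ≤ c := (hηA.posSemidef.kronecker hηB.posSemidef).dotProduct_mulVec_nonneg ψ
  have hTA : TA = c⁻¹ • (Ψ * ηBᵀ * Ψᴴ) * ηA := by
    rw [smul_mul_assoc, ← trB_vecMulVec_mul_kronecker]
  have hP : (c⁻¹ • (Ψ * ηBᵀ * Ψᴴ)).PosSemidef :=
    (hηB.posSemidef.transpose.mul_mul_conjTranspose_same Ψ).smul (inv_nonneg.mpr hc)
  obtain ⟨r, hr, hrμ⟩ := RCLike.nonneg_iff_exists_ofReal.mp
    (hP.nonneg_of_mem_spectrum_mul hηA.posSemidef (hTA ▸ hμ))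
  exact ⟨r, hr, hrμ.symm⟩

/-- For positive definite `η_A, η_B` and `⟨ψ|η|ψ⟩ ≠ 0` with `η = η_A ⊗ η_B`,
all eigenvalues of `T_A = tr_B(|ψ⟩⟨ψ|η)/⟨ψ|η|ψ⟩` are nonnegative reals. -/
theorem eigenvalues_nonneg_of_posDef_factors {m k : ℕ}
    (ηA : Matrix (Fin m) (Fin m) ℂ) (ηB : Matrix (Fin k) (Fin k) ℂ)
    (hηA : ηA.PosDef) (hηB : ηB.PosDef)
    (ψ : Fin m × Fin k → ℂ)
    (hψ : star ψ ⬝ᵥ (ηA ⊗ₖ ηB).mulVec ψ ≠ 0) :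
    let TA : Matrix (Fin m) (Fin m) ℂ :=
      (star ψ ⬝ᵥ (ηA ⊗ₖ ηB).mulVec ψ)⁻¹ •
        trB (vecMulVec ψ (star ψ) * (ηA ⊗ₖ ηB))
    ∀ μ ∈ spectrum ℂ TA, ∃ r : ℝ, 0 ≤ r ∧ μ = (r : ℂ) :=
  eigenvalues_nonneg_of_posDef_factors_general ηA ηB hηA hηB ψ
end

section
/- Let U be a unitary operator and Φ a nonzero vector. If there exists a Hermitian invertible operator η such that η' := Uη satisfies η'|Φ⟩ = |Φ⟩ and (η')² = 1, then the operator T := |Φ⟩⟨Φ|U is η-pseudo-Hermitian, i.e., η T η⁻¹ = T†. -/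
/-!
Write `η' = U η`. Unitarity turns `η' Φ = Φ` into `η Φ = U† Φ`, and its adjoint, by
hermiticity of `η`, into `Φ† η U† = Φ†`, whence `Φ† U η⁻¹ = Φ†`. Hence
`η |Φ⟩⟨Φ| U η⁻¹ = |ηΦ⟩⟨Φ† U η⁻¹| = U† |Φ⟩⟨Φ| = T†`.
-/

open Matrix

namespace Matrix

variable {n α : Type*} [Fintype n] [DecidableEq n]

theorem mulVec_eq_conjTranspose_mulVec_of_mul_mulVec_eq [Semiring α] [StarRing α]
    {U η : Matrix n n α} {Φ : n → α} (hU : Uᴴ * U = 1) (hfix : (U * η) *ᵥ Φ = Φ) :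
    η *ᵥ Φ = Uᴴ *ᵥ Φ := by
  calc η *ᵥ Φ = (Uᴴ * U * η) *ᵥ Φ := by rw [hU, Matrix.one_mul]
    _ = Uᴴ *ᵥ Φ := by rw [Matrix.mul_assoc, ← mulVec_mulVec, hfix]

theorem star_vecMul_mul_inv_eq_of_mul_mulVec_eq [CommRing α] [StarRing α]
    {U η : Matrix n n α} {Φ : n → α} (hU : Uᴴ * U = 1) (hη : η.IsHermitian)
    (hinv : IsUnit η.det) (hfix : (U * η) *ᵥ Φ = Φ) :
    star Φ ᵥ* (U * η⁻¹) = star Φ := by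
  have hfix_star : star Φ ᵥ* (η * Uᴴ) = star Φ := by
    simpa only [star_mulVec, conjTranspose_mul, hη.eq] using congrArg star hfix
  calc star Φ ᵥ* (U * η⁻¹) = star Φ ᵥ* (η * Uᴴ) ᵥ* (U * η⁻¹) := by rw [hfix_star]
    _ = star Φ ᵥ* (η * (Uᴴ * U) * η⁻¹) := by simp only [vecMul_vecMul, Matrix.mul_assoc]
    _ = star Φ := by rw [hU, Matrix.mul_one, mul_nonsing_inv η hinv, vecMul_one]

end Matrix

theorem rankOne_mul_unitary_pseudo_hermitian_general {d : ℕ}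
    (U η : Matrix (Fin d) (Fin d) ℂ) (hU : Uᴴ * U = 1)
    (hη : η.IsHermitian) (hinv : IsUnit η.det)
    (Φ : Fin d → ℂ)
    (hfix : (U * η).mulVec Φ = Φ) :
    let T : Matrix (Fin d) (Fin d) ℂ := vecMulVec Φ (star Φ) * U
    η * T * η⁻¹ = Tᴴ := by
  intro T
  calc η * T * η⁻¹ = vecMulVec (η *ᵥ Φ) (star Φ ᵥ* (U * η⁻¹)) := by
        simp only [T, vecMulVec_mul, mul_vecMulVec, vecMul_vecMul]
    _ = Uᴴ * vecMulVec Φ (star Φ) := by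
        rw [mulVec_eq_conjTranspose_mulVec_of_mul_mulVec_eq hU hfix,
          star_vecMul_mul_inv_eq_of_mul_mulVec_eq hU hη hinv hfix, mul_vecMulVec]
    _ = Tᴴ := by rw [conjTranspose_mul, conjTranspose_vecMulVec, star_star]

/-- If `U` is unitary, `Φ ≠ 0`, and there is a Hermitian invertible `η` such that
`η' := Uη` satisfies `η'|Φ⟩ = |Φ⟩` and `(η')² = 1`, then `T := |Φ⟩⟨Φ|U` is
η-pseudo-Hermitian: `η T η⁻¹ = T†`. -/
theorem rankOne_mul_unitary_pseudo_hermitian {d : ℕ}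
    (U η : Matrix (Fin d) (Fin d) ℂ) (hU : Uᴴ * U = 1)
    (hη : η.IsHermitian) (hinv : IsUnit η.det)
    (Φ : Fin d → ℂ) (hΦ : Φ ≠ 0)
    (hfix : (U * η).mulVec Φ = Φ) (hsq : (U * η) * (U * η) = 1) :
    let T : Matrix (Fin d) (Fin d) ℂ := vecMulVec Φ (star Φ) * U
    η * T * η⁻¹ = Tᴴ :=
  rankOne_mul_unitary_pseudo_hermitian_general U η hU hη hinv Φ hfix
end
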